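/- Let m ≥ 2, a = 1/2, and suppose the real numbers a, b satisfy the two equations (2m-1)·S - 4λ(2m+4b) + 2λS = 0 and (2m-1)·b·S + 8λb = 0, where S = 2m(2m+4b) + 2m and λ = -(1/2)(2m+1) - b and b ≠ 0. Then b = -(2m² - m - 2)/(4(m-1)). -/
import Mathlib

/-- Algebraic core of Theorem 6.7: a Sasakian quasi-Killing spinor of type (1/2, b)
is a WK-spinor iff b = -(2m² - m - 2)/(4(m-1)). -/
theorem stmt_0 (m : ℕ) (hm : 2 ≤ m) (a b S lam : ℝ)
    (ha : a = 1/2)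
    (hS : S = 2*(m:ℝ)*(2*(m:ℝ)+4*b) + 2*(m:ℝ))
    (hlam : lam = -(1/2)*(2*(m:ℝ)+1) - b)
    (hb : b ≠ 0)
    (heq1 : (2*(m:ℝ)-1)*S - 4*lam*(2*(m:ℝ)+4*b) + 2*lam*S = 0)
    (heq2 : (2*(m:ℝ)-1)*b*S + 8*lam*b = 0) :
    b = -(2*(m:ℝ)^2 - (m:ℝ) - 2)/(4*((m:ℝ)-1)) := by
  have hM : (2:ℝ) ≤ (m:ℝ) := by exact_mod_cast hm
  have hm1 : (m:ℝ) - 1 ≠ 0 := by linarith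
  have key : (2*(m:ℝ)-1)*S + 8*lam = 0 := by
    have h : ((2*(m:ℝ)-1)*S + 8*lam) * b = 0 := by linarith [heq2]
    rcases mul_eq_zero.mp h with h' | h'
    · exact h'
    · exact absurd h' hb
  subst hS hlam
  field_simp
  nlinarith [key, sq_nonneg ((m:ℝ)+1), sq_nonneg b]
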